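/- For every path α in a partial HDA X there exists a sparse path β in X such that src(β) = src(α), tgt(β) = tgt(α), and β recognizes the same ipomset as α. -/

import Mathlib

open scoped Classical

namespace HDA

/-! ### Ipomsets over a fixed alphabet -/

structure PreIpomset (σ : Type) : Type 1 where
  carrier : Type
  fin : Finite carrier
  lt : carrier → carrier → Prop
  evord : carrier → carrier → Prop
  S : Set carrier
  T : Set carrier
  lab : carrier → σ

namespace PreIpomset

variable {σ : Type}

/-- The precedence order is empty. -/
def Discrete (P : PreIpomset σ) : Prop := ∀ x y, ¬ P.lt x y

/-- Validity: `lt` is a strict partial order which is an interval order, `evord` is acyclic,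
for distinct events exactly one of the four relations holds, sources are minimal and
targets are maximal.  (All ipomsets considered are interval.) -/
structure IsIpomset (P : PreIpomset σ) : Prop where
  lt_trans : ∀ x y z, P.lt x y → P.lt y z → P.lt x z
  lt_irrefl : ∀ x, ¬ P.lt x x
  evord_acyclic : ∀ x, ¬ Relation.TransGen P.evord x x
  total : ∀ x y : P.carrier, x ≠ y → P.lt x y ∨ P.lt y x ∨ P.evord x y ∨ P.evord y x
  lt_not_evord : ∀ x y, P.lt x y → ¬ P.evord x y ∧ ¬ P.evord y x
  src_min : ∀ x ∈ P.S, ∀ y, ¬ P.lt y x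
  tgt_max : ∀ x ∈ P.T, ∀ y, ¬ P.lt x y
  interval : ∀ w x y z, P.lt w x → P.lt y z → P.lt w z ∨ P.lt y x

/-- A conclist: a discrete ipomset with empty interfaces. -/
def IsConclist (P : PreIpomset σ) : Prop :=
  P.IsIpomset ∧ P.Discrete ∧ P.S = ∅ ∧ P.T = ∅

/-- A starter `⟨U∖A,U,U⟩`. -/
def IsStarter (P : PreIpomset σ) : Prop := P.IsIpomset ∧ P.Discrete ∧ P.T = Set.univ

/-- A terminator `⟨U,U,U∖B⟩`. -/
def IsTerminator (P : PreIpomset σ) : Prop := P.IsIpomset ∧ P.Discrete ∧ P.S = Set.univ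

/-- An identity `⟨U,U,U⟩`. -/
def IsIdentityIpomset (P : PreIpomset σ) : Prop :=
  P.IsIpomset ∧ P.Discrete ∧ P.S = Set.univ ∧ P.T = Set.univ

def IsProperStarter (P : PreIpomset σ) : Prop := P.IsStarter ∧ P.S ≠ Set.univ

def IsProperTerminator (P : PreIpomset σ) : Prop := P.IsTerminator ∧ P.T ≠ Set.univ

/-- Isomorphism of (pre)ipomsets. -/
def Iso (P Q : PreIpomset σ) : Prop :=
  ∃ f : P.carrier ≃ Q.carrier,
    (∀ x y, P.lt x y ↔ Q.lt (f x) (f y)) ∧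
    (∀ x y, P.evord x y ↔ Q.evord (f x) (f y)) ∧
    (∀ x, x ∈ P.S ↔ f x ∈ Q.S) ∧
    (∀ x, x ∈ P.T ↔ f x ∈ Q.T) ∧
    (∀ x, Q.lab (f x) = P.lab x)

/-- Restriction to a subset of events, with empty interfaces. -/
def restrict (P : PreIpomset σ) (K : Set P.carrier) : PreIpomset σ where
  carrier := {x : P.carrier // x ∈ K}
  fin := by haveI := P.fin; exact inferInstance
  lt := fun x y => P.lt x.val y.val
  evord := fun x y => P.evord x.val y.val
  S := ∅
  T := ∅
  lab := fun x => P.lab x.val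

/-- The source interface of `P` as a conclist. -/
def srcIface (P : PreIpomset σ) : PreIpomset σ := P.restrict P.S

/-- The target interface of `P` as a conclist. -/
def tgtIface (P : PreIpomset σ) : PreIpomset σ := P.restrict P.T

/-- The underlying conclist (forget interfaces). -/
def conclistOf (P : PreIpomset σ) : PreIpomset σ := { P with S := ∅, T := ∅ }

/-- The identity ipomset `⟨U,U,U⟩` on the conclist underlying `P`. -/
def idOf (P : PreIpomset σ) : PreIpomset σ := { P with S := Set.univ, T := Set.univ }

/-- The discrete ipomset `⟨S,U,T⟩` on the conclist underlying `P`. -/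
def withIfaces (P : PreIpomset σ) (S T : Set P.carrier) : PreIpomset σ :=
  { P with S := S, T := T }

/-- The starter `⟨U∖A,U,U⟩` on the conclist underlying `P`. -/
def starter (P : PreIpomset σ) (A : Set P.carrier) : PreIpomset σ :=
  { P with S := Aᶜ, T := Set.univ }

/-- The terminator `⟨U,U,U∖B⟩` on the conclist underlying `P`. -/
def terminator (P : PreIpomset σ) (B : Set P.carrier) : PreIpomset σ :=
  { P with S := Set.univ, T := Bᶜ }

/-- A matching `T_P ≅ S_Q`, i.e. an isomorphism of interface conclists
along which `P` and `Q` may be glued. -/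
structure Matching (P Q : PreIpomset σ) : Type where
  g : {x : P.carrier // x ∈ P.T} ≃ {y : Q.carrier // y ∈ Q.S}
  evord_iff : ∀ x y, P.evord x.val y.val ↔ Q.evord (g x).val (g y).val
  lab_eq : ∀ x, Q.lab (g x).val = P.lab x.val

def gluePOf (P Q : PreIpomset σ) :
    P.carrier ⊕ {y : Q.carrier // y ∉ Q.S} → Option P.carrier
  | Sum.inl x => some x
  | Sum.inr _ => none

noncomputable def glueQOf (P Q : PreIpomset σ) (m : Matching P Q) :
    P.carrier ⊕ {y : Q.carrier // y ∉ Q.S} → Option Q.carrier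
  | Sum.inl x => if h : x ∈ P.T then some (m.g ⟨x, h⟩).val else none
  | Sum.inr y => some y.val

/-- The gluing `P * Q` along a matching `T_P ≅ S_Q`. -/
noncomputable def glue (P Q : PreIpomset σ) (m : Matching P Q) : PreIpomset σ where
  carrier := P.carrier ⊕ {y : Q.carrier // y ∉ Q.S}
  fin := by haveI := P.fin; haveI := Q.fin; exact inferInstance
  lt := fun u v =>
    (∃ x x', gluePOf P Q u = some x ∧ gluePOf P Q v = some x' ∧ P.lt x x') ∨
    (∃ y y', glueQOf P Q m u = some y ∧ glueQOf P Q m v = some y' ∧ Q.lt y y') ∨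
    ((∃ x, gluePOf P Q u = some x ∧ x ∉ P.T) ∧
     (∃ y, glueQOf P Q m v = some y ∧ y ∉ Q.S))
  evord := fun u v =>
    (∃ x x', gluePOf P Q u = some x ∧ gluePOf P Q v = some x' ∧ P.evord x x') ∨
    (∃ y y', glueQOf P Q m u = some y ∧ glueQOf P Q m v = some y' ∧ Q.evord y y')
  S := {u | ∃ x, gluePOf P Q u = some x ∧ x ∈ P.S}
  T := {u | ∃ y, glueQOf P Q m u = some y ∧ y ∈ Q.T}
  lab := Sum.elim P.lab fun y => Q.lab y.val

/-- `R` is (isomorphic to) the gluing `P * Q`; in particular `T_P ≅ S_Q`. -/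
def GlueRel (P Q R : PreIpomset σ) : Prop :=
  ∃ m : Matching P Q, Iso (glue P Q m) R

/-- A choice of gluing (used when a matching is known to exist). -/
noncomputable def glueChoice (P Q : PreIpomset σ) : PreIpomset σ :=
  if h : Nonempty (Matching P Q) then glue P Q h.some else P

/-- `GluesTo l R`: `R` is the gluing of the nonempty list `l` of ipomsets. -/
inductive GluesTo : List (PreIpomset σ) → PreIpomset σ → Prop
  | single {P R : PreIpomset σ} : Iso P R → GluesTo [P] R
  | cons {P : PreIpomset σ} {l : List (PreIpomset σ)} {R' R : PreIpomset σ} :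
      GluesTo l R' → GlueRel P R' R → GluesTo (P :: l) R

/-- Proper starters and proper terminators alternate. -/
def Alternating (l : List (PreIpomset σ)) : Prop :=
  l.Chain' fun P Q => (IsProperStarter P ∧ IsProperTerminator Q) ∨
    (IsProperTerminator P ∧ IsProperStarter Q)

/-- `l` is a sparse step decomposition of `R`: either a single identity, or an
alternating sequence of proper starters and proper terminators gluing to `R`. -/
def IsSparseDecomp (l : List (PreIpomset σ)) (R : PreIpomset σ) : Prop :=
  GluesTo l R ∧
  ((∃ I, l = [I] ∧ IsIdentityIpomset I) ∨
   ((∀ P ∈ l, IsProperStarter P ∨ IsProperTerminator P) ∧ Alternating l))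

/-- `P ∈ iPoms^q`: the sparse step decomposition of `P` does not end with a
proper starter (i.e. it ends with a terminator or is a single identity). -/
def InQ (P : PreIpomset σ) : Prop :=
  ∃ l, IsSparseDecomp l P ∧ ∀ Q, l.getLast? = some Q → ¬ IsProperStarter Q

end PreIpomset

open PreIpomset

variable {σ : Type}

/-! ### Languages and rational operations -/

def glueLang (L M : Set (PreIpomset σ)) : Set (PreIpomset σ) :=
  {R | ∃ P ∈ L, ∃ Q ∈ M, GlueRel P Q R}

def powLang (L : Set (PreIpomset σ)) : ℕ → Set (PreIpomset σ)
  | 0 => L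
  | n + 1 => glueLang L (powLang L n)

/-- `L⁺ = ⋃_{n ≥ 1} Lⁿ`. -/
def plusLang (L : Set (PreIpomset σ)) : Set (PreIpomset σ) := ⋃ n, powLang L n

/-- Rational languages of (interval) ipomsets: generated from `∅` and singletons
(up to isomorphism) of starters and terminators by union, gluing composition and plus. -/
inductive Rational : Set (PreIpomset σ) → Prop
  | empty : Rational ∅
  | single {P : PreIpomset σ} : IsStarter P ∨ IsTerminator P → Rational {Q | Iso Q P}
  | union {L M : Set (PreIpomset σ)} : Rational L → Rational M → Rational (L ∪ M)
  | concat {L M : Set (PreIpomset σ)} : Rational L → Rational M → Rational (glueLang L M)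
  | plus {L : Set (PreIpomset σ)} : Rational L → Rational (plusLang L)

/-! ### P-automata -/

structure PAutomaton (σ : Type) : Type 1 where
  Q : Type
  E : Type
  src : E → Q
  tgt : E → Q
  lab : E → PreIpomset σ
  mu : Q → PreIpomset σ
  start : Set Q
  accept : Set Q

namespace PAutomaton

variable {σ : Type}

/-- The axioms of a P-automaton: finite sets of states and transitions, states
labelled by conclists, transitions by interval ipomsets, with
`μ(s(e)) ≅ S_{λ(e)}` and `μ(t(e)) ≅ T_{λ(e)}`. -/
def IsPA (A : PAutomaton σ) : Prop :=
  Finite A.Q ∧ Finite A.E ∧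
  (∀ q, (A.mu q).IsConclist) ∧ (∀ e, (A.lab e).IsIpomset) ∧
  (∀ e, Iso (A.lab e).srcIface (A.mu (A.src e))) ∧
  (∀ e, Iso (A.lab e).tgtIface (A.mu (A.tgt e)))

/-- ST-automaton: every label is a starter or a terminator. -/
def IsST (A : PAutomaton σ) : Prop := ∀ e, IsStarter (A.lab e) ∨ IsTerminator (A.lab e)

/-- gST-automaton: every label is discrete. -/
def IsGST (A : PAutomaton σ) : Prop := ∀ e, (A.lab e).Discrete

/-- No transition is labelled by an identity. -/
def NoSilent (A : PAutomaton σ) : Prop := ∀ e, ¬ IsIdentityIpomset (A.lab e)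

/-- A reduced gST-automaton: no silent transitions and conditions (a)–(f). -/
def Reduced (A : PAutomaton σ) : Prop :=
  NoSilent A ∧
  (∀ e, A.tgt e ∉ A.start) ∧
  (∀ e, A.src e ∉ A.accept) ∧
  (∀ e, (A.lab e).T = Set.univ → A.tgt e ∈ A.accept) ∧
  (∀ e, (A.lab e).S = Set.univ → A.src e ∈ A.start) ∧
  (∀ e e', A.src e ∈ A.start → A.src e' = A.src e → e' = e) ∧
  (∀ e e', A.tgt e ∈ A.accept → A.tgt e' = A.tgt e → e' = e)

/-- Paths in a P-automaton, from a state to a state. -/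
inductive Path (A : PAutomaton σ) : A.Q → A.Q → Type
  | nil (q : A.Q) : Path A q q
  | cons (e : A.E) {r : A.Q} (rest : Path A (A.tgt e) r) : Path A (A.src e) r

/-- The (interval) ipomset recognized by a path, up to isomorphism:
the gluing of the labels of its transitions (an identity for a constant path). -/
inductive Rec {A : PAutomaton σ} : ∀ {p r : A.Q}, Path A p r → PreIpomset σ → Prop
  | nil (q : A.Q) (R : PreIpomset σ) : Iso (A.mu q).idOf R → Rec (Path.nil q) R
  | cons (e : A.E) {r : A.Q} (rest : Path A (A.tgt e) r) {R' R : PreIpomset σ} :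
      Rec rest R' → GlueRel (A.lab e) R' R → Rec (Path.cons e rest) R

/-- The language of a P-automaton. -/
def lang (A : PAutomaton σ) : Set (PreIpomset σ) :=
  {R | ∃ p r, ∃ α : Path A p r, p ∈ A.start ∧ r ∈ A.accept ∧ Rec α R}

/-- Dimension of a transition. -/
noncomputable def dim (A : PAutomaton σ) (e : A.E) : ℕ := Nat.card (A.lab e).carrier

/-- Number of bad starter transitions of dimension `n`. -/
noncomputable def bst (A : PAutomaton σ) (n : ℕ) : ℕ :=
  Nat.card {e : A.E // IsProperStarter (A.lab e) ∧ A.tgt e ∉ A.accept ∧ A.dim e = n}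

/-- Number of bad terminator transitions of dimension `n`. -/
noncomputable def btt (A : PAutomaton σ) (n : ℕ) : ℕ :=
  Nat.card {e : A.E // IsProperTerminator (A.lab e) ∧ A.src e ∉ A.start ∧ A.dim e = n}

/-- The automaton `𝒜_c`: remove the starter transition `c`; for every transition `e`
out of `t(c)` add a transition `e*` from `s(c)` to `t(e)` labelled `λ(c) * λ(e)`. -/
noncomputable def Ac (A : PAutomaton σ) (c : A.E) : PAutomaton σ where
  Q := A.Q
  E := {e : A.E // e ≠ c} ⊕ {e : A.E // A.src e = A.tgt c}
  src := Sum.elim (fun e => A.src e.val) fun _ => A.src c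
  tgt := Sum.elim (fun e => A.tgt e.val) fun e => A.tgt e.val
  lab := Sum.elim (fun e => A.lab e.val) fun e => glueChoice (A.lab c) (A.lab e.val)
  mu := A.mu
  start := A.start
  accept := A.accept

/-- Disjoint union of two P-automata. -/
def sumAut (A B : PAutomaton σ) : PAutomaton σ where
  Q := A.Q ⊕ B.Q
  E := A.E ⊕ B.E
  src := Sum.elim (Sum.inl ∘ A.src) (Sum.inr ∘ B.src)
  tgt := Sum.elim (Sum.inl ∘ A.tgt) (Sum.inr ∘ B.tgt)
  lab := Sum.elim A.lab B.lab
  mu := Sum.elim A.mu B.mu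
  start := Sum.inl '' A.start ∪ Sum.inr '' B.start
  accept := Sum.inl '' A.accept ∪ Sum.inr '' B.accept

/-- Concatenation `𝒜 * ℬ`: disjoint union together with identity-labelled transitions
from accepting states of `𝒜` to initial states of `ℬ` with isomorphic state labels. -/
def concatAut (A B : PAutomaton σ) : PAutomaton σ where
  Q := A.Q ⊕ B.Q
  E := A.E ⊕ B.E ⊕
    {pq : A.Q × B.Q // pq.1 ∈ A.accept ∧ pq.2 ∈ B.start ∧ Iso (A.mu pq.1) (B.mu pq.2)}
  src := Sum.elim (Sum.inl ∘ A.src)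
    (Sum.elim (Sum.inr ∘ B.src) fun pq => Sum.inl pq.val.1)
  tgt := Sum.elim (Sum.inl ∘ A.tgt)
    (Sum.elim (Sum.inr ∘ B.tgt) fun pq => Sum.inr pq.val.2)
  lab := Sum.elim A.lab (Sum.elim B.lab fun pq => (A.mu pq.val.1).idOf)
  mu := Sum.elim A.mu B.mu
  start := Sum.inl '' A.start
  accept := Sum.inr '' B.accept

/-- Kleene plus `𝒜⁺`: add identity-labelled transitions from accepting states
to initial states with isomorphic state labels. -/
def plusAut (A : PAutomaton σ) : PAutomaton σ where
  Q := A.Q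
  E := A.E ⊕
    {pq : A.Q × A.Q // pq.1 ∈ A.accept ∧ pq.2 ∈ A.start ∧ Iso (A.mu pq.1) (A.mu pq.2)}
  src := Sum.elim A.src fun pq => pq.val.1
  tgt := Sum.elim A.tgt fun pq => pq.val.2
  lab := Sum.elim A.lab fun pq => (A.mu pq.val.1).idOf
  mu := A.mu
  start := A.start
  accept := A.accept

end PAutomaton

/-! ### Partial HDAs -/

/-- `g` exhibits `V` as the sub-conclist of `U` obtained by removing the events in `K`. -/
def IsFaceEmbed (U : PreIpomset σ) (K : Set U.carrier) (V : PreIpomset σ)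
    (g : V.carrier → U.carrier) : Prop :=
  Function.Injective g ∧ Set.range g = Kᶜ ∧
  (∀ u v, V.evord u v ↔ U.evord (g u) (g v)) ∧
  (∀ u, U.lab (g u) = V.lab u)

/-- The data of a partial higher-dimensional automaton: cells labelled by conclists,
partial face maps, initial and accepting cells. -/
structure PrePHDA (σ : Type) : Type 1 where
  cell : Type
  ev : cell → PreIpomset σ
  face : (x : cell) → Set (ev x).carrier → Set (ev x).carrier → Option cell
  start : Set cell
  accept : Set cell

namespace PrePHDA

variable {σ : Type}

/-- The lax precubical identity: whenever `δ_{A,B}(x)` and `δ_{C,D}(δ_{A,B}(x))` are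
defined, `δ_{A∪C,B∪D}(x)` is defined and equal to the composite. -/
def IsLax (X : PrePHDA σ) : Prop :=
  ∀ x (A B : Set (X.ev x).carrier) y, X.face x A B = some y →
    ∀ g, IsFaceEmbed (X.ev x) (A ∪ B) (X.ev y) g →
      ∀ (C D : Set (X.ev y).carrier) z, X.face y C D = some z →
        X.face x (A ∪ g '' C) (B ∪ g '' D) = some z

/-- The axioms of a partial HDA. -/
def IsPHDA (X : PrePHDA σ) : Prop :=
  (∀ x, (X.ev x).IsConclist) ∧
  (∀ x, X.face x ∅ ∅ = some x) ∧
  (∀ x A B y, X.face x A B = some y →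
    Disjoint A B ∧ ∃ g, IsFaceEmbed (X.ev x) (A ∪ B) (X.ev y) g) ∧
  IsLax X

/-- Strictness: `δ_{C,D} ∘ δ_{A,B} = δ_{A∪C,B∪D}` as partial functions. -/
def IsStrict (X : PrePHDA σ) : Prop :=
  IsPHDA X ∧
  (∀ x (A B : Set (X.ev x).carrier) y, X.face x A B = some y →
    ∀ g, IsFaceEmbed (X.ev x) (A ∪ B) (X.ev y) g →
      ∀ C D : Set (X.ev y).carrier,
        X.face x (A ∪ g '' C) (B ∪ g '' D) = X.face y C D) ∧
  (∀ x (A B C D : Set (X.ev x).carrier),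
    Disjoint (A ∪ C) (B ∪ D) → C ∪ D ⊆ (A ∪ B)ᶜ →
    X.face x A B = none → X.face x (A ∪ C) (B ∪ D) = none)

/-- Paths in a partial HDA: sequences of upsteps and downsteps. -/
inductive Path (X : PrePHDA σ) : X.cell → X.cell → Type
  | nil (x : X.cell) : Path X x x
  | up {x z : X.cell} (y : X.cell) (A : Set (X.ev y).carrier)
      (h : X.face y A ∅ = some x) (rest : Path X y z) : Path X x z
  | down {z w : X.cell} (y : X.cell) (B : Set (X.ev y).carrier)
      (h : X.face y ∅ B = some z) (rest : Path X z w) : Path X y w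

/-- Directions of the steps of a path (`true` = upstep). -/
def Path.dirs {X : PrePHDA σ} : {x z : X.cell} → Path X x z → List Bool
  | _, _, .nil _ => []
  | _, _, .up _ _ _ rest => true :: rest.dirs
  | _, _, .down _ _ _ rest => false :: rest.dirs

/-- A path is sparse if upsteps and downsteps alternate. -/
def Path.Sparse {X : PrePHDA σ} {x z : X.cell} (α : Path X x z) : Prop :=
  α.dirs.Chain' (· ≠ ·)

/-- Concatenation of paths. -/
def Path.comp {X : PrePHDA σ} : {x y z : X.cell} → Path X x y → Path X y z → Path X x z
  | _, _, _, .nil _, β => β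
  | _, _, _, .up y A h rest, β => .up y A h (rest.comp β)
  | _, _, _, .down y B h rest, β => .down y B h (rest.comp β)

/-- The ipomset recognized by a path, up to isomorphism: the gluing of the starters
and terminators of its steps (an identity for a constant path). -/
inductive Rec {X : PrePHDA σ} : ∀ {x z : X.cell}, Path X x z → PreIpomset σ → Prop
  | nil (x : X.cell) (R : PreIpomset σ) :
      Iso (X.ev x).idOf R → Rec (Path.nil x) R
  | up {x z : X.cell} (y : X.cell) (A : Set (X.ev y).carrier)
      (h : X.face y A ∅ = some x) (rest : Path X y z) {R' R : PreIpomset σ} :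
      Rec rest R' → GlueRel ((X.ev y).starter A) R' R → Rec (Path.up y A h rest) R
  | down {z w : X.cell} (y : X.cell) (B : Set (X.ev y).carrier)
      (h : X.face y ∅ B = some z) (rest : Path X z w) {R' R : PreIpomset σ} :
      Rec rest R' → GlueRel ((X.ev y).terminator B) R' R → Rec (Path.down y B h rest) R

/-- The language of a partial HDA. -/
def lang (X : PrePHDA σ) : Set (PreIpomset σ) :=
  {R | ∃ x z, ∃ α : Path X x z, x ∈ X.start ∧ z ∈ X.accept ∧ Rec α R}

/-- `X(K,P)`: cells reachable from `K` by a path recognizing `P`. -/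
def track (X : PrePHDA σ) (K : Set X.cell) (P : PreIpomset σ) : Set X.cell :=
  {x | ∃ s, ∃ α : Path X s x, s ∈ K ∧ Rec α P}

/-- Deterministic partial HDA: at most one initial cell per conclist, and lower
face maps are "injective" in the appropriate sense. -/
def Deterministic (X : PrePHDA σ) : Prop :=
  (∀ x y, x ∈ X.start → y ∈ X.start → Iso (X.ev x) (X.ev y) → x = y) ∧
  (∀ (y y' : X.cell) (A : Set (X.ev y).carrier) (A' : Set (X.ev y').carrier)
      (x : X.cell), X.face y A ∅ = some x → X.face y' A' ∅ = some x →
    (∃ f : (X.ev y).carrier ≃ (X.ev y').carrier,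
      (∀ u v, (X.ev y).evord u v ↔ (X.ev y').evord (f u) (f v)) ∧
      (∀ u, (X.ev y').lab (f u) = (X.ev y).lab u) ∧ f '' A = A') → y = y')

end PrePHDA

/-! ### Relational HDAs -/

/-- The data of a relational HDA: face relations instead of partial face maps. -/
structure PreRHDA (σ : Type) : Type 1 where
  cell : Type
  ev : cell → PreIpomset σ
  face : (x : cell) → Set (ev x).carrier → Set (ev x).carrier → Set cell
  start : Set cell
  accept : Set cell

namespace PreRHDA

variable {σ : Type}

/-- The axioms of a relational HDA, with the lax precubical identity
`δ_{C,D} ∘ δ_{A,B} ⊆ δ_{A∪C,B∪D}`. -/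
def IsRHDA (X : PreRHDA σ) : Prop :=
  (∀ x, (X.ev x).IsConclist) ∧
  (∀ x, X.face x ∅ ∅ = {x}) ∧
  (∀ x A B y, y ∈ X.face x A B →
    Disjoint A B ∧ ∃ g, IsFaceEmbed (X.ev x) (A ∪ B) (X.ev y) g) ∧
  (∀ x (A B : Set (X.ev x).carrier) y, y ∈ X.face x A B →
    ∀ g, IsFaceEmbed (X.ev x) (A ∪ B) (X.ev y) g →
      ∀ (C D : Set (X.ev y).carrier) z, z ∈ X.face y C D →
        z ∈ X.face x (A ∪ g '' C) (B ∪ g '' D))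

/-- Paths in a relational HDA. -/
inductive Path (X : PreRHDA σ) : X.cell → X.cell → Type 1
  | nil (x : X.cell) : Path X x x
  | up {x z : X.cell} (y : X.cell) (A : Set (X.ev y).carrier)
      (h : x ∈ X.face y A ∅) (rest : Path X y z) : Path X x z
  | down {z w : X.cell} (y : X.cell) (B : Set (X.ev y).carrier)
      (h : z ∈ X.face y ∅ B) (rest : Path X z w) : Path X y w

/-- The ipomset recognized by a path in a relational HDA. -/
inductive Rec {X : PreRHDA σ} : ∀ {x z : X.cell}, Path X x z → PreIpomset σ → Prop
  | nil (x : X.cell) (R : PreIpomset σ) :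
      Iso (X.ev x).idOf R → Rec (Path.nil x) R
  | up {x z : X.cell} (y : X.cell) (A : Set (X.ev y).carrier)
      (h : x ∈ X.face y A ∅) (rest : Path X y z) {R' R : PreIpomset σ} :
      Rec rest R' → GlueRel ((X.ev y).starter A) R' R → Rec (Path.up y A h rest) R
  | down {z w : X.cell} (y : X.cell) (B : Set (X.ev y).carrier)
      (h : z ∈ X.face y ∅ B) (rest : Path X z w) {R' R : PreIpomset σ} :
      Rec rest R' → GlueRel ((X.ev y).terminator B) R' R → Rec (Path.down y B h rest) R

/-- The language of a relational HDA. -/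
def lang (X : PreRHDA σ) : Set (PreIpomset σ) :=
  {R | ∃ x z, ∃ α : Path X x z, x ∈ X.start ∧ z ∈ X.accept ∧ Rec α R}

/-- The ST-automaton `ST(X)` of a relational HDA `X`: states are cells, transitions
mimic the starting and terminating of events. -/
def stAut (X : PreRHDA σ) : PAutomaton σ where
  Q := X.cell
  E := (Σ q : X.cell, Σ A : Set (X.ev q).carrier, {p : X.cell // p ∈ X.face q A ∅}) ⊕
       (Σ q : X.cell, Σ B : Set (X.ev q).carrier, {r : X.cell // r ∈ X.face q ∅ B})
  src := Sum.elim (fun t => t.2.2.val) fun t => t.1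
  tgt := Sum.elim (fun t => t.1) fun t => t.2.2.val
  lab := Sum.elim (fun t => (X.ev t.1).starter t.2.1) fun t => (X.ev t.1).terminator t.2.1
  mu := X.ev
  start := X.start
  accept := X.accept

end PreRHDA

/-! ### The partial HDA of a reduced gST-automaton -/

open PAutomaton

/-- The cell representing a state `q` in `X(𝒜)`: `q` is merged with a terminator
transition out of it or a starter transition into it, if such exists. -/
noncomputable def cellOfState (A : PAutomaton σ) (q : A.Q) : A.E ⊕ A.Q :=
  if h : ∃ e, IsTerminator (A.lab e) ∧ A.src e = q then Sum.inl h.choose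
  else if h' : ∃ e, IsStarter (A.lab e) ∧ A.tgt e = q then Sum.inl h'.choose
  else Sum.inr q

/-- `X(𝒜)`: cells are `(Q ⊔ E)/∼`, with the only defined (nontrivial) face maps
`δ⁰_{U∖S}([e]) = [s(e)]` and `δ¹_{U∖T}([e]) = [t(e)]` for `λ(e) = ⟨S,U,T⟩`. -/
noncomputable def XofA (A : PAutomaton σ) : PrePHDA σ where
  cell := A.E ⊕ A.Q
  ev := Sum.elim (fun e => (A.lab e).conclistOf) A.mu
  face := fun x =>
    match x with
    | Sum.inl e => fun As Bs =>
        if As = ∅ ∧ Bs = ∅ then some (Sum.inl e)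
        else if As = (A.lab e).Sᶜ ∧ Bs = ∅ then some (cellOfState A (A.src e))
        else if As = ∅ ∧ Bs = (A.lab e).Tᶜ then some (cellOfState A (A.tgt e))
        else none
    | Sum.inr q => fun As Bs =>
        if As = ∅ ∧ Bs = ∅ then some (Sum.inr q) else none
  start := cellOfState A '' A.start
  accept := cellOfState A '' A.accept

end HDA

/-!
Induct on the path, prepending its steps one at a time to a sparse path recognizing the rest.
A step can be prepended directly unless it points in the same direction as the first step of the
sparse path. In that case the two steps merge into one: the lax precubical identity turns
`x = δ⁰_A y` and `y = δ⁰_C y₁` into `x = δ⁰_{C ∪ A} y₁` (and dually for downsteps), and the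
recognized ipomset does not change, because gluing is associative and the gluing of two
starters (terminators) along a matching is again a starter (terminator).
-/

namespace HDA

namespace PreIpomset

variable {σ : Type}

def IsIsoMap {P Q : PreIpomset σ} (f : P.carrier ≃ Q.carrier) : Prop :=
  (∀ x y, P.lt x y ↔ Q.lt (f x) (f y)) ∧
    (∀ x y, P.evord x y ↔ Q.evord (f x) (f y)) ∧
    (∀ x, x ∈ P.S ↔ f x ∈ Q.S) ∧
    (∀ x, x ∈ P.T ↔ f x ∈ Q.T) ∧
    (∀ x, Q.lab (f x) = P.lab x)

namespace Iso

theorem refl (P : PreIpomset σ) : Iso P P :=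
  ⟨Equiv.refl _, fun _ _ => Iff.rfl, fun _ _ => Iff.rfl, fun _ => Iff.rfl, fun _ => Iff.rfl,
    fun _ => rfl⟩

theorem symm {P Q : PreIpomset σ} : Iso P Q → Iso Q P := by
  rintro ⟨f, hlt, hev, hS, hT, hlab⟩
  refine ⟨f.symm, fun x y => ?_, fun x y => ?_, fun x => ?_, fun x => ?_, fun x => ?_⟩ <;>
    simp [hlt, hev, hS, hT, ← hlab]

theorem trans {P Q R : PreIpomset σ} : Iso P Q → Iso Q R → Iso P R := by
  rintro ⟨f, flt, fev, fS, fT, flab⟩ ⟨g, glt, gev, gS, gT, glab⟩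
  exact ⟨f.trans g, fun _ _ => (flt _ _).trans (glt _ _), fun _ _ => (fev _ _).trans (gev _ _),
    fun _ => (fS _).trans (gS _), fun _ => (fT _).trans (gT _),
    fun _ => (glab _).trans (flab _)⟩

end Iso

namespace Matching

variable {P Q : PreIpomset σ} (m : Matching P Q)

/-- The matching as a partial map `P ⇀ Q`. Stating the gluing lemmas through it keeps them free
of existentials over membership proofs `x ∈ P.T`, under which `simp` cannot rewrite. -/
noncomputable def toFun (x : P.carrier) : Option Q.carrier :=
  if h : x ∈ P.T then some (m.g ⟨x, h⟩).val else none

theorem toFun_eq_some {x : P.carrier} {y : Q.carrier} :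
    m.toFun x = some y ↔ ∃ h : x ∈ P.T, (m.g ⟨x, h⟩).val = y := by
  by_cases h : x ∈ P.T <;> simp [toFun, h]

theorem toFun_of_mem {x : P.carrier} (h : x ∈ P.T) : m.toFun x = some (m.g ⟨x, h⟩).val :=
  dif_pos h

theorem toFun_eq_none {x : P.carrier} : m.toFun x = none ↔ x ∉ P.T := by
  by_cases h : x ∈ P.T <;> simp [toFun, h]

theorem mem_S_of_toFun_eq_some {x : P.carrier} {y : Q.carrier} (h : m.toFun x = some y) :
    y ∈ Q.S := by
  obtain ⟨hx, rfl⟩ := m.toFun_eq_some.1 h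
  exact (m.g _).2

theorem eq_of_toFun_eq_some {x x' : P.carrier} {y : Q.carrier} (h : m.toFun x = some y)
    (h' : m.toFun x' = some y) : x = x' := by
  obtain ⟨hx, rfl⟩ := m.toFun_eq_some.1 h
  obtain ⟨hx', e⟩ := m.toFun_eq_some.1 h'
  exact congrArg Subtype.val (m.g.injective (Subtype.ext e.symm))

theorem exists_toFun_eq_some {x : P.carrier} (hx : x ∈ P.T) {F : Q.carrier → Prop} :
    (∃ y, m.toFun x = some y ∧ F y) ↔ F (m.g ⟨x, hx⟩) := by
  simp [m.toFun_of_mem hx]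

theorem evord_iff_of_toFun {x x' : P.carrier} {y y' : Q.carrier} (h : m.toFun x = some y)
    (h' : m.toFun x' = some y') : P.evord x x' ↔ Q.evord y y' := by
  obtain ⟨hx, rfl⟩ := m.toFun_eq_some.1 h
  obtain ⟨hx', rfl⟩ := m.toFun_eq_some.1 h'
  exact m.evord_iff ⟨x, hx⟩ ⟨x', hx'⟩

theorem lab_eq_of_toFun {x : P.carrier} {y : Q.carrier} (h : m.toFun x = some y) :
    Q.lab y = P.lab x := by
  obtain ⟨hx, rfl⟩ := m.toFun_eq_some.1 h
  exact m.lab_eq _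

end Matching

section Glue

variable {P Q : PreIpomset σ} (m : Matching P Q)

@[simp] theorem glueQOf_inl (x : P.carrier) : glueQOf P Q m (Sum.inl x) = m.toFun x := rfl

@[simp] theorem glueQOf_inr (b : {y : Q.carrier // y ∉ Q.S}) :
    glueQOf P Q m (Sum.inr b) = some b.val := rfl

@[simp] theorem gluePOf_inl (x : P.carrier) : gluePOf P Q (Sum.inl x) = some x := rfl

@[simp] theorem gluePOf_inr (b : {y : Q.carrier // y ∉ Q.S}) : gluePOf P Q (Sum.inr b) = none :=
  rfl

@[simp] theorem glue_lt_inl_inl (x x' : P.carrier) :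
    (glue P Q m).lt (Sum.inl x) (Sum.inl x') ↔
      P.lt x x' ∨ ∃ y y', m.toFun x = some y ∧ m.toFun x' = some y' ∧ Q.lt y y' := by
  have : ¬ ∃ y, m.toFun x' = some y ∧ y ∉ Q.S := fun ⟨_, hy, hyS⟩ =>
    hyS (m.mem_S_of_toFun_eq_some hy)
  simp [glue, this]

@[simp] theorem glue_lt_inl_inr (x : P.carrier) (b : {y : Q.carrier // y ∉ Q.S}) :
    (glue P Q m).lt (Sum.inl x) (Sum.inr b) ↔
      (∃ y, m.toFun x = some y ∧ Q.lt y b) ∨ m.toFun x = none := by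
  simp [glue, Matching.toFun_eq_none, b.2]

@[simp] theorem glue_lt_inr_inl (b : {y : Q.carrier // y ∉ Q.S}) (x : P.carrier) :
    (glue P Q m).lt (Sum.inr b) (Sum.inl x) ↔ ∃ y, m.toFun x = some y ∧ Q.lt b y := by
  simp [glue]

@[simp] theorem glue_lt_inr_inr (b b' : {y : Q.carrier // y ∉ Q.S}) :
    (glue P Q m).lt (Sum.inr b) (Sum.inr b') ↔ Q.lt b b' := by
  simp [glue]

@[simp] theorem glue_evord_inl_inl (x x' : P.carrier) :
    (glue P Q m).evord (Sum.inl x) (Sum.inl x') ↔ P.evord x x' := by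
  have := m.evord_iff
  simp only [glue, gluePOf_inl, glueQOf_inl, Option.some.injEq, Matching.toFun_eq_some]
  aesop

@[simp] theorem glue_evord_inl_inr (x : P.carrier) (b : {y : Q.carrier // y ∉ Q.S}) :
    (glue P Q m).evord (Sum.inl x) (Sum.inr b) ↔ ∃ y, m.toFun x = some y ∧ Q.evord y b := by
  simp [glue]

@[simp] theorem glue_evord_inr_inl (b : {y : Q.carrier // y ∉ Q.S}) (x : P.carrier) :
    (glue P Q m).evord (Sum.inr b) (Sum.inl x) ↔ ∃ y, m.toFun x = some y ∧ Q.evord b y := by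
  simp [glue]

@[simp] theorem glue_evord_inr_inr (b b' : {y : Q.carrier // y ∉ Q.S}) :
    (glue P Q m).evord (Sum.inr b) (Sum.inr b') ↔ Q.evord b b' := by
  simp [glue]

-- `(glue P Q m).carrier` is a sum type only after unfolding `glue`; the membership instance is
-- pinned to `(glue P Q m).carrier` so that these lemmas match goals about `glue`.
@[simp] theorem inl_mem_glue_S (x : P.carrier) :
    @Membership.mem (glue P Q m).carrier _ _ (glue P Q m).S (Sum.inl x) ↔ x ∈ P.S := by
  change (∃ x', gluePOf P Q (Sum.inl x) = some x' ∧ x' ∈ P.S) ↔ _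
  simp

@[simp] theorem inr_notMem_glue_S (b : {y : Q.carrier // y ∉ Q.S}) :
    ¬ @Membership.mem (glue P Q m).carrier _ _ (glue P Q m).S (Sum.inr b) := by
  change ¬ ∃ x, gluePOf P Q (Sum.inr b) = some x ∧ x ∈ P.S
  simp

@[simp] theorem inl_mem_glue_T (x : P.carrier) :
    @Membership.mem (glue P Q m).carrier _ _ (glue P Q m).T (Sum.inl x) ↔
      ∃ y, m.toFun x = some y ∧ y ∈ Q.T :=
  Iff.rfl

@[simp] theorem inr_mem_glue_T (b : {y : Q.carrier // y ∉ Q.S}) :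
    @Membership.mem (glue P Q m).carrier _ _ (glue P Q m).T (Sum.inr b) ↔ b.val ∈ Q.T := by
  change (∃ y, glueQOf P Q m (Sum.inr b) = some y ∧ y ∈ Q.T) ↔ _
  simp

theorem glue_discrete (hP : P.Discrete) (hQ : Q.Discrete)
    (hPQ : P.T = Set.univ ∨ Q.S = Set.univ) : (glue P Q m).Discrete := by
  rintro (x | b) (x' | b') <;> simp [hP _ _, hQ _ _, Matching.toFun_eq_none]
  rcases hPQ with hT | hS
  · exact hT ▸ Set.mem_univ x
  · exact absurd (by simp [hS] : b'.val ∈ Q.S) b'.2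

end Glue

theorem iso_glue_glue {P P' Q Q' : PreIpomset σ} (m : Matching P Q) (m' : Matching P' Q')
    {f : P.carrier ≃ P'.carrier} (hf : IsIsoMap f) {h : Q.carrier ≃ Q'.carrier} (hh : IsIsoMap h)
    (hm : ∀ x, m'.toFun (f x) = (m.toFun x).map h) :
    Iso (glue P Q m) (glue P' Q' m') := by
  obtain ⟨flt, fev, fS, fT, flab⟩ := hf
  obtain ⟨hlt, hev, hS, hT, hlab⟩ := hh
  let F : (glue P Q m).carrier ≃ (glue P' Q' m').carrier :=
    Equiv.sumCongr f (h.subtypeEquiv fun q => (hS q).not)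
  have hinl : ∀ x, F (Sum.inl x) = Sum.inl (f x) := fun _ => rfl
  have hinr : ∀ b, F (Sum.inr b) = Sum.inr ⟨h b.val, (hS b.val).not.1 b.2⟩ := fun _ => rfl
  refine ⟨F, ?_, ?_, ?_, ?_, ?_⟩
  · rintro (x | b) (x' | b') <;> simp [hinl, hinr, hm, flt, hlt]
  · rintro (x | b) (x' | b') <;> simp [hinl, hinr, hm, fev, hev]
  · rintro (x | b) <;> simp [hinl, hinr, fS]
  · rintro (x | b) <;> simp [hinl, hinr, hm, hT]
  · rintro (x | b)
    · exact flab x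
    · exact hlab b.val

def Matching.congr {P P' Q Q' : PreIpomset σ} (m : Matching P Q) {f : P.carrier ≃ P'.carrier}
    (hf : IsIsoMap f) {h : Q.carrier ≃ Q'.carrier} (hh : IsIsoMap h) : Matching P' Q' where
  g := ((f.subtypeEquiv hf.2.2.2.1).symm.trans m.g).trans (h.subtypeEquiv hh.2.2.1)
  evord_iff x y := by
    simp only [Equiv.trans_apply, Equiv.subtypeEquiv_apply, ← hh.2.1, ← m.evord_iff]
    simp [hf.2.1]
  lab_eq x := by
    simp only [Equiv.trans_apply, Equiv.subtypeEquiv_apply, hh.2.2.2.2, m.lab_eq]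
    rw [← hf.2.2.2.2, Equiv.subtypeEquiv_symm, Equiv.subtypeEquiv_apply, Equiv.apply_symm_apply]

theorem Matching.congr_toFun {P P' Q Q' : PreIpomset σ} (m : Matching P Q)
    {f : P.carrier ≃ P'.carrier} (hf : IsIsoMap f) {h : Q.carrier ≃ Q'.carrier} (hh : IsIsoMap h)
    (x : P.carrier) : (m.congr hf hh).toFun (f x) = (m.toFun x).map h := by
  by_cases hx : x ∈ P.T
  · rw [toFun_of_mem _ hx, toFun_of_mem _ ((hf.2.2.2.1 x).1 hx)]
    simp [Matching.congr]
  · rw [(toFun_eq_none _).2 hx, (toFun_eq_none _).2 (mt (hf.2.2.2.1 x).2 hx), Option.map_none]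

theorem GlueRel.of_iso {P P' Q Q' R : PreIpomset σ} (hP : Iso P P') (hQ : Iso Q Q') :
    GlueRel P Q R → GlueRel P' Q' R := by
  obtain ⟨f, hf⟩ := hP
  obtain ⟨h, hh⟩ := hQ
  rintro ⟨m, e⟩
  exact ⟨m.congr hf hh, (iso_glue_glue m _ hf hh (m.congr_toFun hf hh)).symm.trans e⟩

section Interfaces

variable {P Q : PreIpomset σ} (m : Matching P Q)

theorem glueQOf_injective {u u' : (glue P Q m).carrier} {y : Q.carrier}
    (h : glueQOf P Q m u = some y) (h' : glueQOf P Q m u' = some y) : u = u' := by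
  rcases u with x | b <;> rcases u' with x' | b' <;>
    simp only [glueQOf_inl, glueQOf_inr, Option.some.injEq] at h h'
  · rw [m.eq_of_toFun_eq_some h h']
  · exact absurd (h' ▸ m.mem_S_of_toFun_eq_some h) b'.2
  · exact absurd (h ▸ m.mem_S_of_toFun_eq_some h') b.2
  · exact congrArg Sum.inr (Subtype.ext (h.trans h'.symm))

noncomputable def srcEquiv : {x // x ∈ P.S} ≃ {u // u ∈ (glue P Q m).S} :=
  Equiv.ofBijective (fun x => ⟨Sum.inl x.val, (inl_mem_glue_S m _).2 x.2⟩) <| by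
    refine ⟨fun x x' h => Subtype.ext (Sum.inl.inj (congrArg Subtype.val h)), ?_⟩
    rintro ⟨x | b, h⟩
    · exact ⟨⟨x, (inl_mem_glue_S m x).1 h⟩, rfl⟩
    · exact absurd h (inr_notMem_glue_S m b)

theorem val_eq_inl_srcEquiv_symm (u : {u // u ∈ (glue P Q m).S}) :
    u.val = Sum.inl ((srcEquiv m).symm u).val := by
  conv_lhs => rw [← (srcEquiv m).apply_symm_apply u]
  rfl

noncomputable def tgtEquiv : {u // u ∈ (glue P Q m).T} ≃ {y // y ∈ Q.T} :=
  Equiv.ofBijective (fun u => ⟨u.2.choose, u.2.choose_spec.2⟩) <| by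
    refine ⟨fun u u' h => Subtype.ext ?_, fun y => ?_⟩
    · have hc : u.2.choose = u'.2.choose := congrArg Subtype.val h
      exact glueQOf_injective m u.2.choose_spec.1 (hc ▸ u'.2.choose_spec.1)
    · obtain ⟨u, hu⟩ : ∃ u, glueQOf P Q m u = some y.val := by
        by_cases hy : y.val ∈ Q.S
        · exact ⟨Sum.inl (m.g.symm ⟨y, hy⟩).val, by simp [Matching.toFun_of_mem]⟩
        · exact ⟨Sum.inr ⟨y, hy⟩, rfl⟩
      have hT : u ∈ (glue P Q m).T := ⟨y, hu, y.2⟩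
      exact ⟨⟨u, hT⟩, Subtype.ext (Option.some_inj.1 (hT.choose_spec.1.symm.trans hu))⟩

theorem glueQOf_tgtEquiv (u : {u // u ∈ (glue P Q m).T}) :
    glueQOf P Q m u.val = some (tgtEquiv m u).val :=
  u.2.choose_spec.1

theorem glue_evord_iff_tgtEquiv (u v : {u // u ∈ (glue P Q m).T}) :
    (glue P Q m).evord u v ↔ Q.evord (tgtEquiv m u) (tgtEquiv m v) := by
  have hu := glueQOf_tgtEquiv m u
  have hv := glueQOf_tgtEquiv m v
  rcases u with ⟨x | b, _⟩ <;> rcases v with ⟨x' | b', _⟩ <;>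
    simp only [glueQOf_inl, glueQOf_inr, Option.some.injEq] at hu hv
  · exact (glue_evord_inl_inl m x x').trans (m.evord_iff_of_toFun hu hv)
  · rw [glue_evord_inl_inr, hv]
    simp [hu]
  · rw [glue_evord_inr_inl, hu]
    simp [hv]
  · rw [glue_evord_inr_inr, hu, hv]

theorem glue_lab_eq_tgtEquiv (u : {u // u ∈ (glue P Q m).T}) :
    (glue P Q m).lab u = Q.lab (tgtEquiv m u) := by
  have hu := glueQOf_tgtEquiv m u
  rcases u with ⟨x | b, _⟩ <;> simp only [glueQOf_inl, glueQOf_inr, Option.some.injEq] at hu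
  · exact (m.lab_eq_of_toFun hu).symm
  · rw [← hu]
    rfl

end Interfaces

section Assoc

variable {P Q R : PreIpomset σ}

-- `Sum.inl` typed into the gluing, so that `simp` may substitute it for variables of that type.
def glueInl (k : Matching Q R) : Q.carrier → (glue Q R k).carrier := Sum.inl

namespace Matching

noncomputable def ofSrc {k : Matching Q R} (m : Matching P (glue Q R k)) : Matching P Q where
  g := m.g.trans (srcEquiv k).symm
  evord_iff x y := by
    rw [m.evord_iff, val_eq_inl_srcEquiv_symm k (m.g x), val_eq_inl_srcEquiv_symm k (m.g y),
      glue_evord_inl_inl]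
    rfl
  lab_eq x := by
    rw [← m.lab_eq, val_eq_inl_srcEquiv_symm k (m.g x)]
    rfl

theorem toFun_ofSrc_cases {k : Matching Q R} (m : Matching P (glue Q R k)) (x : P.carrier) :
    ((ofSrc m).toFun x = none ∧ m.toFun x = none) ∨
      ∃ q, (ofSrc m).toFun x = some q ∧ m.toFun x = some (glueInl k q) := by
  by_cases hx : x ∈ P.T
  · refine Or.inr ⟨_, toFun_of_mem _ hx, ?_⟩
    rw [toFun_of_mem _ hx, val_eq_inl_srcEquiv_symm k (m.g _)]
    rfl
  · exact Or.inl ⟨(toFun_eq_none _).2 hx, (toFun_eq_none _).2 hx⟩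

noncomputable def ofTgt (m : Matching P Q) (k : Matching Q R) : Matching (glue P Q m) R where
  g := (tgtEquiv m).trans k.g
  evord_iff u v := (glue_evord_iff_tgtEquiv m u v).trans (k.evord_iff _ _)
  lab_eq u := (k.lab_eq _).trans (glue_lab_eq_tgtEquiv m u).symm

theorem ofTgt_toFun (m : Matching P Q) (k : Matching Q R) (u : (glue P Q m).carrier) :
    (m.ofTgt k).toFun u = (glueQOf P Q m u).bind k.toFun := by
  by_cases hu : u ∈ (glue P Q m).T
  · rw [toFun_of_mem _ hu, glueQOf_tgtEquiv m ⟨u, hu⟩, Option.bind_some,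
      toFun_of_mem _ (tgtEquiv m ⟨u, hu⟩).2]
    rfl
  · rw [(toFun_eq_none _).2 hu, eq_comm, Option.bind_eq_none_iff]
    exact fun q hq => (toFun_eq_none _).2 fun hqT => hu ⟨q, hq, hqT⟩

end Matching

noncomputable def notSrcEquiv (k : Matching Q R) :
    {q // q ∉ Q.S} ⊕ {r // r ∉ R.S} ≃ {w : (glue Q R k).carrier // w ∉ (glue Q R k).S} :=
  Equiv.ofBijective
    (Sum.elim (fun q => ⟨Sum.inl q.val, (inl_mem_glue_S k _).not.2 q.2⟩)
      fun r => ⟨Sum.inr r, inr_notMem_glue_S k r⟩) <| by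
    refine ⟨?_, ?_⟩
    · rintro (q | r) (q' | r') h <;> have h' := congrArg Subtype.val h
      · exact congrArg Sum.inl (Subtype.ext (Sum.inl.inj h'))
      · exact absurd h' Sum.inl_ne_inr
      · exact absurd h' Sum.inr_ne_inl
      · exact congrArg Sum.inr (Sum.inr.inj h')
    · rintro ⟨q | r, h⟩
      · exact ⟨Sum.inl ⟨q, (inl_mem_glue_S k q).not.1 h⟩, rfl⟩
      · exact ⟨Sum.inr r, rfl⟩

variable (k : Matching Q R) (m : Matching P (glue Q R k))

noncomputable def assocEquiv :
    (glue (glue P Q (Matching.ofSrc m)) R ((Matching.ofSrc m).ofTgt k)).carrier ≃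
      (glue P (glue Q R k) m).carrier :=
  (Equiv.sumAssoc _ _ _).trans (Equiv.sumCongr (Equiv.refl _) (notSrcEquiv k))

theorem assocEquiv_inl_inl (p : P.carrier) : assocEquiv k m (Sum.inl (Sum.inl p)) = Sum.inl p :=
  rfl

theorem assocEquiv_inl_inr (q : {q // q ∉ Q.S}) :
    assocEquiv k m (Sum.inl (Sum.inr q)) =
      Sum.inr ⟨Sum.inl q.val, (inl_mem_glue_S k _).not.2 q.2⟩ :=
  rfl

theorem assocEquiv_inr (r : {r // r ∉ R.S}) :
    assocEquiv k m (Sum.inr r) = Sum.inr ⟨Sum.inr r, inr_notMem_glue_S k r⟩ :=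
  rfl
theorem assocEquiv_lt_iff (w w') :
    (glue (glue P Q (Matching.ofSrc m)) R ((Matching.ofSrc m).ofTgt k)).lt w w' ↔
      (glue P (glue Q R k) m).lt (assocEquiv k m w) (assocEquiv k m w') := by
  have hk := Matching.ofTgt_toFun (Matching.ofSrc m) k
  -- The lemmas about the outer gluing only match while `a` is a variable, so it is split later.
  rcases w with a | r <;> rcases w' with a' | r' <;>
    simp only [glue_lt_inl_inl, glue_lt_inl_inr, glue_lt_inr_inl, glue_lt_inr_inr, hk] <;>
    (try rcases a with p | q) <;> (try rcases a' with p' | q')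
  all_goals simp only [assocEquiv_inl_inl, assocEquiv_inl_inr, assocEquiv_inr, glue_lt_inl_inl,
    glue_lt_inl_inr, glue_lt_inr_inl, glue_lt_inr_inr, glueQOf_inl, glueQOf_inr, Option.bind_some]
  · rcases Matching.toFun_ofSrc_cases m p with ⟨h1, h2⟩ | ⟨q₁, h1, h2⟩ <;>
    rcases Matching.toFun_ofSrc_cases m p' with ⟨h3, h4⟩ | ⟨q₂, h3, h4⟩ <;>
    simp [h1, h2, h3, h4]
    simp [glueInl, or_assoc]
  · rcases Matching.toFun_ofSrc_cases m p with ⟨h1, h2⟩ | ⟨q₁, h1, h2⟩ <;>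
      simp [h1, h2]
    simp [glueInl]
  · rcases Matching.toFun_ofSrc_cases m p' with ⟨h3, h4⟩ | ⟨q₂, h3, h4⟩ <;>
      simp [h3, h4]
    simp [glueInl]
  · rcases Matching.toFun_ofSrc_cases m p with ⟨h1, h2⟩ | ⟨q₁, h1, h2⟩ <;>
      simp [h1, h2]
    simp [glueInl]
  · rcases Matching.toFun_ofSrc_cases m p' with ⟨h3, h4⟩ | ⟨q₂, h3, h4⟩ <;>
      simp [h3, h4]
    simp [glueInl]

theorem assocEquiv_evord_iff (w w') :
    (glue (glue P Q (Matching.ofSrc m)) R ((Matching.ofSrc m).ofTgt k)).evord w w' ↔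
      (glue P (glue Q R k) m).evord (assocEquiv k m w) (assocEquiv k m w') := by
  have hk := Matching.ofTgt_toFun (Matching.ofSrc m) k
  rcases w with a | r <;> rcases w' with a' | r' <;>
    simp only [glue_evord_inl_inl, glue_evord_inl_inr, glue_evord_inr_inl, glue_evord_inr_inr,
      hk] <;>
    (try rcases a with p | q) <;> (try rcases a' with p' | q')
  all_goals simp only [assocEquiv_inl_inl, assocEquiv_inl_inr, assocEquiv_inr,
    glue_evord_inl_inl, glue_evord_inl_inr, glue_evord_inr_inl, glue_evord_inr_inr, glueQOf_inl,
    glueQOf_inr, Option.bind_some]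
  · rcases Matching.toFun_ofSrc_cases m p with ⟨h1, h2⟩ | ⟨q₁, h1, h2⟩ <;>
      simp [h1, h2]
    simp [glueInl]
  · rcases Matching.toFun_ofSrc_cases m p' with ⟨h1, h2⟩ | ⟨q₁, h1, h2⟩ <;>
      simp [h1, h2]
    simp [glueInl]
  · rcases Matching.toFun_ofSrc_cases m p with ⟨h1, h2⟩ | ⟨q₁, h1, h2⟩ <;>
      simp [h1, h2]
    simp [glueInl]
  · rcases Matching.toFun_ofSrc_cases m p' with ⟨h1, h2⟩ | ⟨q₁, h1, h2⟩ <;>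
      simp [h1, h2]
    simp [glueInl]

theorem assocEquiv_mem_S_iff (w) :
    w ∈ (glue (glue P Q (Matching.ofSrc m)) R ((Matching.ofSrc m).ofTgt k)).S ↔
      assocEquiv k m w ∈ (glue P (glue Q R k) m).S := by
  rcases w with a | r
  · simp only [inl_mem_glue_S]
    rcases a with p | q
    · simp only [inl_mem_glue_S, assocEquiv_inl_inl]
    · simp only [inr_notMem_glue_S, assocEquiv_inl_inr]
  · simp only [inr_notMem_glue_S, assocEquiv_inr]

theorem assocEquiv_mem_T_iff (w) :
    w ∈ (glue (glue P Q (Matching.ofSrc m)) R ((Matching.ofSrc m).ofTgt k)).T ↔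
      assocEquiv k m w ∈ (glue P (glue Q R k) m).T := by
  have hk := Matching.ofTgt_toFun (Matching.ofSrc m) k
  rcases w with a | r
  · simp only [inl_mem_glue_T, hk]
    rcases a with p | q
    · rcases Matching.toFun_ofSrc_cases m p with ⟨h1, h2⟩ | ⟨q₁, h1, h2⟩ <;>
        simp [assocEquiv_inl_inl, h1, h2]
      simp [glueInl]
    · simp [assocEquiv_inl_inr]
  · simp [assocEquiv_inr]

theorem iso_glue_assoc :
    Iso (glue (glue P Q (Matching.ofSrc m)) R ((Matching.ofSrc m).ofTgt k))
      (glue P (glue Q R k) m) :=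
  ⟨assocEquiv k m, assocEquiv_lt_iff k m, assocEquiv_evord_iff k m, assocEquiv_mem_S_iff k m,
    assocEquiv_mem_T_iff k m, by rintro ((p | q) | r) <;> rfl⟩

end Assoc

theorem GlueRel.assoc {P Q R' R'' X : PreIpomset σ} (h₁ : GlueRel P R' X)
    (h₂ : GlueRel Q R'' R') : ∃ PQ, GlueRel P Q PQ ∧ GlueRel PQ R'' X := by
  obtain ⟨k, e⟩ := h₂
  obtain ⟨m, e'⟩ := h₁.of_iso (Iso.refl P) e.symm
  exact ⟨_, ⟨Matching.ofSrc m, Iso.refl _⟩, ⟨_, (iso_glue_assoc k m).trans e'⟩⟩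

section Starter
variable {U U' : PreIpomset σ} {A : Set U.carrier} {C : Set U'.carrier}
  (m : Matching (U.starter A) (U'.starter C))

def Matching.starterEmbed (u : U.carrier) : U'.carrier := (m.g ⟨u, Set.mem_univ u⟩).val

theorem Matching.isFaceEmbed_starterEmbed : IsFaceEmbed U' C U m.starterEmbed := by
  refine ⟨fun u v h => ?_, ?_, fun u v => m.evord_iff ⟨u, _⟩ ⟨v, _⟩, fun u => m.lab_eq ⟨u, _⟩⟩
  · exact congrArg Subtype.val (m.g.injective (Subtype.ext h))
  · ext y
    refine ⟨?_, fun hy => ⟨(m.g.symm ⟨y, hy⟩).val, ?_⟩⟩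
    · rintro ⟨u, rfl⟩
      exact (m.g _).2
    · exact congrArg Subtype.val (m.g.apply_symm_apply ⟨y, hy⟩)

theorem iso_glue_starter_starter (hU : U.Discrete) (hU' : U'.Discrete) :
    Iso (glue (U.starter A) (U'.starter C) m) (U'.starter (C ∪ m.starterEmbed '' A)) := by
  let F : (glue (U.starter A) (U'.starter C) m).carrier ≃
      (U'.starter (C ∪ m.starterEmbed '' A)).carrier :=
    (Equiv.sumCongr ((Equiv.subtypeUnivEquiv Set.mem_univ).symm.trans m.g) (Equiv.refl _)).trans
      (Equiv.sumCompl (· ∈ Cᶜ))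
  have hinl : ∀ u, F (Sum.inl u) = m.starterEmbed u := fun _ => rfl
  have hinr : ∀ b, F (Sum.inr b) = b.val := fun _ => rfl
  have hex : ∀ u (p : (U'.starter C).carrier → Prop),
      (∃ y, m.toFun u = some y ∧ p y) ↔ p (m.starterEmbed u) :=
    fun u _ => m.exists_toFun_eq_some (Set.mem_univ u)
  refine ⟨F, ?_, ?_, ?_, ?_, ?_⟩
  · exact fun w w' => iff_of_false (glue_discrete m hU hU' (Or.inl rfl) w w') (hU' _ _)
  · rintro (u | b) (u' | b') <;> simp only [glue_evord_inl_inl, glue_evord_inl_inr,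
      glue_evord_inr_inl, glue_evord_inr_inr, hinl, hinr, hex]
    exacts [m.evord_iff ⟨u, trivial⟩ ⟨u', trivial⟩, Iff.rfl, Iff.rfl, Iff.rfl]
  · have hg := m.isFaceEmbed_starterEmbed
    rintro (u | b) <;> simp only [inl_mem_glue_S, inr_notMem_glue_S, hinl, hinr]
    · refine not_congr ⟨fun hu => Or.inr ⟨u, hu, rfl⟩, ?_⟩
      rintro (hC | ⟨v, hv, e⟩)
      · exact absurd hC (hg.2.1 ▸ Set.mem_range_self u : m.starterEmbed u ∈ Cᶜ)
      · exact hg.1 e ▸ hv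
    · exact iff_of_false id fun h => h (Or.inl (not_not.1 b.2))
  · rintro (u | b) <;> simp only [inl_mem_glue_T, inr_mem_glue_T, hinl, hinr, hex] <;>
      exact iff_of_true trivial trivial
  · rintro (u | b)
    · exact m.lab_eq ⟨u, trivial⟩
    · rfl

end Starter

section Terminator
variable {U U' : PreIpomset σ} {B : Set U.carrier} {D : Set U'.carrier}
  (m : Matching (U.terminator B) (U'.terminator D))

def Matching.terminatorEmbed (v : U'.carrier) : U.carrier := (m.g.symm ⟨v, Set.mem_univ v⟩).val

theorem Matching.terminatorEmbed_apply (x : U.carrier) (hx : x ∈ (U.terminator B).T) :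
    m.terminatorEmbed (m.g ⟨x, hx⟩).val = x :=
  congrArg Subtype.val (m.g.symm_apply_apply ⟨x, hx⟩)

theorem Matching.isFaceEmbed_terminatorEmbed : IsFaceEmbed U B U' m.terminatorEmbed := by
  refine ⟨fun u v h => ?_, ?_, fun u v => ?_, fun v => ?_⟩
  · exact congrArg Subtype.val (m.g.symm.injective (Subtype.ext h))
  · ext x
    refine ⟨?_, fun hx => ⟨(m.g ⟨x, hx⟩).val, m.terminatorEmbed_apply x hx⟩⟩
    rintro ⟨v, rfl⟩
    exact (m.g.symm _).2
  · have := m.evord_iff (m.g.symm ⟨u, trivial⟩) (m.g.symm ⟨v, trivial⟩)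
    rwa [Equiv.apply_symm_apply, Equiv.apply_symm_apply, Iff.comm] at this
  · have := m.lab_eq (m.g.symm ⟨v, trivial⟩)
    rwa [Equiv.apply_symm_apply, eq_comm] at this

theorem iso_glue_terminator_terminator (hU : U.Discrete) (hU' : U'.Discrete) :
    Iso (glue (U.terminator B) (U'.terminator D) m)
      (U.terminator (B ∪ m.terminatorEmbed '' D)) := by
  have : IsEmpty {y // y ∉ (U'.terminator D).S} := ⟨fun b => b.2 trivial⟩
  refine ⟨Equiv.sumEmpty _ _, fun w w' => ?_, ?_, ?_, ?_, ?_⟩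
  · exact iff_of_false (glue_discrete m hU hU' (Or.inr rfl) w w') (hU _ _)
  · rintro (u | b) (u' | b')
    · exact glue_evord_inl_inl m u u'
    · exact isEmptyElim b'
    · exact isEmptyElim b
    · exact isEmptyElim b
  · rintro (u | b)
    · exact iff_of_true ((inl_mem_glue_S m u).2 trivial) trivial
    · exact isEmptyElim b
  · rintro (u | b)
    · simp only [inl_mem_glue_T]
      show (∃ y, m.toFun u = some y ∧ y ∉ D) ↔ u ∉ B ∪ m.terminatorEmbed '' D
      by_cases hB : u ∈ B
      · rw [(m.toFun_eq_none).2 (not_not.2 hB)]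
        exact iff_of_false (by simp) fun h => h (Or.inl hB)
      · rw [m.exists_toFun_eq_some hB]
        refine not_congr ⟨fun hD => Or.inr ⟨_, hD, m.terminatorEmbed_apply u hB⟩, ?_⟩
        rintro (hB' | ⟨v, hv, e⟩)
        · exact absurd hB' hB
        · rwa [m.isFaceEmbed_terminatorEmbed.1 (e.trans (m.terminatorEmbed_apply u hB).symm)]
            at hv
    · exact isEmptyElim b
  · rintro (u | b)
    · rfl
    · exact isEmptyElim b

end Terminator

theorem GlueRel.starter_starter {U U' PQ : PreIpomset σ} {A : Set U.carrier}
    {C : Set U'.carrier} (hU : U.Discrete) (hU' : U'.Discrete)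
    (h : GlueRel (U.starter A) (U'.starter C) PQ) :
    ∃ g, IsFaceEmbed U' C U g ∧ Iso PQ (U'.starter (C ∪ g '' A)) := by
  obtain ⟨m, e⟩ := h
  exact ⟨m.starterEmbed, m.isFaceEmbed_starterEmbed,
    e.symm.trans (iso_glue_starter_starter m hU hU')⟩

theorem GlueRel.terminator_terminator {U U' PQ : PreIpomset σ} {B : Set U.carrier}
    {D : Set U'.carrier} (hU : U.Discrete) (hU' : U'.Discrete)
    (h : GlueRel (U.terminator B) (U'.terminator D) PQ) :
    ∃ g, IsFaceEmbed U B U' g ∧ Iso PQ (U.terminator (B ∪ g '' D)) := by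
  obtain ⟨m, e⟩ := h
  exact ⟨m.terminatorEmbed, m.isFaceEmbed_terminatorEmbed,
    e.symm.trans (iso_glue_terminator_terminator m hU hU')⟩

end PreIpomset

open PreIpomset

namespace PrePHDA

variable {σ : Type} {X : PrePHDA σ}

namespace Path

theorem sparse_up_nil {x y : X.cell} {A : Set (X.ev y).carrier} (h : X.face y A ∅ = some x) :
    (up y A h (nil y)).Sparse :=
  List.isChain_singleton _

theorem sparse_down_nil {y z : X.cell} {B : Set (X.ev y).carrier} (h : X.face y ∅ B = some z) :
    (down y B h (nil z)).Sparse :=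
  List.isChain_singleton _

theorem Sparse.up_down {x y z w : X.cell} {A : Set (X.ev y).carrier} {B : Set (X.ev y).carrier}
    (h : X.face y A ∅ = some x) (h' : X.face y ∅ B = some z) {β : Path X z w}
    (hβ : (down y B h' β).Sparse) : (up y A h (down y B h' β)).Sparse :=
  List.isChain_cons_cons.2 ⟨by decide, hβ⟩

theorem Sparse.down_up {y z y' w : X.cell} {B : Set (X.ev y).carrier} {A : Set (X.ev y').carrier}
    (h : X.face y ∅ B = some z) (h' : X.face y' A ∅ = some z) {β : Path X y' w}
    (hβ : (up y' A h' β).Sparse) : (down y B h (up y' A h' β)).Sparse :=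
  List.isChain_cons_cons.2 ⟨by decide, hβ⟩

end Path

theorem exists_sparse_up (hX : X.IsPHDA) {x y z : X.cell} {A : Set (X.ev y).carrier}
    (h : X.face y A ∅ = some x) {β : Path X y z} (hβ : β.Sparse) {R' R : PreIpomset σ}
    (hβR : Rec β R') (hR : GlueRel ((X.ev y).starter A) R' R) :
    ∃ β' : Path X x z, β'.Sparse ∧ Rec β' R := by
  cases β with
  | nil => exact ⟨_, Path.sparse_up_nil h, .up y A h _ hβR hR⟩
  | down y B h' β => exact ⟨_, hβ.up_down h h', .up y A h _ hβR hR⟩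
  | up y₁ C h₁ β =>
    cases hβR with
    | up _ _ _ _ hβR' hR' =>
      obtain ⟨PQ, hPQ, hPQR⟩ := hR.assoc hR'
      obtain ⟨g, hg, e⟩ := hPQ.starter_starter (hX.1 y).2.1 (hX.1 y₁).2.1
      have h' : X.face y₁ (C ∪ g '' A) ∅ = some x := by
        simpa using hX.2.2.2 y₁ C ∅ y h₁ g (by simpa using hg) A ∅ x h
      exact ⟨.up y₁ _ h' β, hβ, .up _ _ h' β hβR' (hPQR.of_iso e (Iso.refl _))⟩

theorem exists_sparse_down (hX : X.IsPHDA) {y z w : X.cell} {B : Set (X.ev y).carrier}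
    (h : X.face y ∅ B = some z) {β : Path X z w} (hβ : β.Sparse) {R' R : PreIpomset σ}
    (hβR : Rec β R') (hR : GlueRel ((X.ev y).terminator B) R' R) :
    ∃ β' : Path X y w, β'.Sparse ∧ Rec β' R := by
  cases β with
  | nil => exact ⟨_, Path.sparse_down_nil h, .down y B h _ hβR hR⟩
  | up y' A h' β => exact ⟨_, hβ.down_up h h', .down y B h _ hβR hR⟩
  | @down z₂ _ _ D h₁ β =>
    cases hβR with
    | down _ _ _ _ hβR' hR' =>
      obtain ⟨PQ, hPQ, hPQR⟩ := hR.assoc hR'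
      obtain ⟨g, hg, e⟩ := hPQ.terminator_terminator (hX.1 y).2.1 (hX.1 z).2.1
      have h' : X.face y ∅ (B ∪ g '' D) = some z₂ := by
        simpa using hX.2.2.2 y ∅ B z h g (by simpa using hg) ∅ D z₂ h₁
      exact ⟨.down y _ h' β, hβ, .down _ _ h' β hβR' (hPQR.of_iso e (Iso.refl _))⟩

end PrePHDA

theorem sparse_path_exists_general {σ : Type} (X : PrePHDA σ) (hX : X.IsPHDA)
    {x z : X.cell} (α : PrePHDA.Path X x z) (R : PreIpomset σ) (hα : PrePHDA.Rec α R) :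
    ∃ β : PrePHDA.Path X x z, β.Sparse ∧ PrePHDA.Rec β R := by
  induction α generalizing R with
  | nil x => exact ⟨.nil x, List.isChain_nil, hα⟩
  | up y A h α ih =>
    cases hα with
    | up _ _ _ _ hαR hR =>
      obtain ⟨β, hβ, hβR⟩ := ih _ hαR
      exact PrePHDA.exists_sparse_up hX h hβ hβR hR
  | down y B h α ih =>
    cases hα with
    | down _ _ _ _ hαR hR =>
      obtain ⟨β, hβ, hβR⟩ := ih _ hαR
      exact PrePHDA.exists_sparse_down hX h hβ hβR hR

/-- For every path `α` in a partial HDA `X` there is a sparse path `β`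
with the same source and target recognizing the same ipomset. -/
theorem sparse_path_exists {σ : Type} [Finite σ] (X : PrePHDA σ) (hX : X.IsPHDA)
    {x z : X.cell} (α : PrePHDA.Path X x z) (R : PreIpomset σ) (hα : PrePHDA.Rec α R) :
    ∃ β : PrePHDA.Path X x z, β.Sparse ∧ PrePHDA.Rec β R :=
  sparse_path_exists_general X hX α R hα

end HDA
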